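/- Two tripartite states Ψ' = (Γ'₁,...,Γ'_r) and Ψ = (Γ₁,...,Γ_r), with Γᵢ, Γ'ᵢ ∈ ℂ^{I₁×I₂} and with each family {vec(Γᵢ)} and {vec(Γ'ᵢ)} linearly independent, are related by invertible matrices A₁ ∈ ℂ^{I₁×I₁}, A₂ ∈ ℂ^{I₂×I₂}, P ∈ ℂ^{r×r} via (A₁ ⊗ A₂)(vec(Γ'₁),...,vec(Γ'_r)) = (vec(Γ₁),...,vec(Γ_r)) P, if and only if there exists an invertible block upper-triangular matrix P̃ = [[P, Y],[0, P̄]] such that the realignment of U P̃ U'^{-1} has rank 1, where U (resp. U') is an invertible matrix whose first r columns are vec(Γ₁),...,vec(Γ_r) (resp. vec(Γ'₁),...,vec(Γ'_r)). -/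

import Mathlib

open Matrix

noncomputable section

/-- Column-major index pairing: `(i, j) ↦ i + m * j`. -/
def vecIdx (m n : ℕ) : Fin m × Fin n ≃ Fin (m * n) :=
  (Equiv.prodComm (Fin m) (Fin n)).trans
    (finProdFinEquiv.trans (finCongr (Nat.mul_comm n m)))

/-- Column-major vectorization of a matrix. -/
def vec {m n : ℕ} (M : Matrix (Fin m) (Fin n) ℂ) : Fin (m * n) → ℂ :=
  fun k => M ((vecIdx m n).symm k).1 ((vecIdx m n).symm k).2

/-- The realignment of an `(I₁·I₂)×(I₁·I₂)` matrix viewed as an `I₁×I₁` array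
of `I₂×I₂` blocks: the rows of `R(A)` are the vectorized blocks. -/
def realign {I₁ I₂ : ℕ} (A : Matrix (Fin (I₁ * I₂)) (Fin (I₁ * I₂)) ℂ) :
    Matrix (Fin (I₁ * I₁)) (Fin (I₂ * I₂)) ℂ :=
  Matrix.of fun p q =>
    A (finProdFinEquiv (((vecIdx I₁ I₁).symm p).1, ((vecIdx I₂ I₂).symm q).1))
      (finProdFinEquiv (((vecIdx I₁ I₁).symm p).2, ((vecIdx I₂ I₂).symm q).2))

/-- The Kronecker product `A₁ ⊗ A₂` of `A₁ : ℂ^{I₁×I₁}` (block index) and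
`A₂ : ℂ^{I₂×I₂}` (inside the blocks). -/
def kron {I₁ I₂ : ℕ} (A₁ : Matrix (Fin I₁) (Fin I₁) ℂ) (A₂ : Matrix (Fin I₂) (Fin I₂) ℂ) :
    Matrix (Fin (I₁ * I₂)) (Fin (I₁ * I₂)) ℂ :=
  Matrix.reindex finProdFinEquiv finProdFinEquiv (Matrix.kroneckerMap (· * ·) A₁ A₂)

/-- unvectorization -/
def unvec {m n : ℕ} (u : Fin (m * n) → ℂ) : Matrix (Fin m) (Fin n) ℂ :=
  Matrix.of fun a b => u (vecIdx m n (a, b))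

lemma vec_unvec {m n : ℕ} (u : Fin (m * n) → ℂ) : _root_.vec (unvec u) = u := by
  funext k
  simp [_root_.vec, unvec]

lemma unvec_vec {m n : ℕ} (M : Matrix (Fin m) (Fin n) ℂ) : unvec (_root_.vec M) = M := by
  ext a b
  simp [_root_.vec, unvec]

lemma realign_kron {I₁ I₂ : ℕ} (A₁ : Matrix (Fin I₁) (Fin I₁) ℂ)
    (A₂ : Matrix (Fin I₂) (Fin I₂) ℂ) :
    realign (kron A₁ A₂) = vecMulVec (_root_.vec A₁) (_root_.vec A₂) := by
  ext p q
  simp [realign, kron, _root_.vec, vecMulVec_apply]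

lemma realign_injective {I₁ I₂ : ℕ} :
    Function.Injective (@realign I₁ I₂) := by
  intro A B h
  ext x y
  obtain ⟨⟨a, c⟩, rfl⟩ := finProdFinEquiv.surjective x
  obtain ⟨⟨b, d⟩, rfl⟩ := finProdFinEquiv.surjective y
  have := congrFun (congrFun h (vecIdx I₁ I₁ (a, b))) (vecIdx I₂ I₂ (c, d))
  simpa [realign] using this

lemma rank_ne_zero_of_ne_zero {a b : ℕ} {N : Matrix (Fin a) (Fin b) ℂ}
    (h : N ≠ 0) : N.rank ≠ 0 := by
  intro h0
  apply h
  rw [Matrix.rank] at h0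
  rw [Submodule.finrank_eq_zero] at h0
  ext i j
  have : N.mulVecLin (Pi.single j 1) = 0 := by
    have : N.mulVecLin (Pi.single j 1) ∈ LinearMap.range N.mulVecLin :=
      LinearMap.mem_range_self _ _
    rw [h0] at this
    simpa using this
  have := congrFun this i
  simpa [Matrix.mulVecLin_apply, Matrix.mulVec_single] using this

lemma rank_vecMulVec_le {a b : ℕ} (u : Fin a → ℂ) (v : Fin b → ℂ) :
    (vecMulVec u v).rank ≤ 1 := by
  rw [vecMulVec_eq (ι := Unit)]
  calc (replicateCol Unit u * replicateRow Unit v).rank ≤ (replicateCol Unit u).rank := Matrix.rank_mul_le_left _ _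
    _ ≤ Fintype.card Unit := Matrix.rank_le_card_width _
    _ = 1 := by simp

lemma rank_vecMulVec_eq_one {a b : ℕ} {u : Fin a → ℂ} {v : Fin b → ℂ}
    (hu : u ≠ 0) (hv : v ≠ 0) : (vecMulVec u v).rank = 1 := by
  have h1 : (vecMulVec u v).rank ≤ 1 := _root_.rank_vecMulVec_le u v
  have h2 : (vecMulVec u v).rank ≠ 0 := by
    apply rank_ne_zero_of_ne_zero
    obtain ⟨i, hi⟩ := Function.ne_iff.mp hu
    obtain ⟨j, hj⟩ := Function.ne_iff.mp hv
    intro h0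
    have := congrFun (congrFun h0 i) j
    simp [vecMulVec_apply] at this
    tauto
  omega

lemma eq_vecMulVec_of_rank_eq_one {a b : ℕ} {N : Matrix (Fin a) (Fin b) ℂ}
    (h : N.rank = 1) : ∃ u v, N = vecMulVec u v := by
  rw [Matrix.rank] at h
  obtain ⟨w, hw0, hw⟩ := finrank_eq_one_iff'.mp h
  choose c hc using fun j : Fin b =>
    hw ⟨N.mulVecLin (Pi.single j 1), LinearMap.mem_range_self _ _⟩
  refine ⟨(w : (Fin a) → ℂ), c, ?_⟩
  ext i j
  have hc' : c j • (w : (Fin a) → ℂ) = N.mulVecLin (Pi.single j 1) := by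
    have := congrArg Subtype.val (hc j)
    simpa using this
  have := congrFun hc' i
  simp [Matrix.mulVecLin_apply, Matrix.mulVec_single] at this
  rw [vecMulVec_apply, mul_comm]
  exact this.symm

section helpers
def pad {r N : ℕ} (hr : r ≤ N) (P : Matrix (Fin r) (Fin r) ℂ) (j : Fin r) : Fin N → ℂ :=
  fun k => ∑ l : Fin r, if k = Fin.castLE hr l then P l j else 0

lemma pad_castLE {r N : ℕ} (hr : r ≤ N) (P : Matrix (Fin r) (Fin r) ℂ) (j l₀ : Fin r) :
    pad hr P j (Fin.castLE hr l₀) = P l₀ j := by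
  rw [pad, Finset.sum_eq_single l₀]
  · simp
  · intro l _ hl
    rw [if_neg]
    intro h
    exact hl (Fin.castLE_inj.mp h.symm)
  · simp

lemma pad_ge {r N : ℕ} (hr : r ≤ N) (P : Matrix (Fin r) (Fin r) ℂ) (j : Fin r)
    {k : Fin N} (hk : r ≤ (k : ℕ)) : pad hr P j k = 0 := by
  rw [pad]
  apply Finset.sum_eq_zero
  intro l _
  rw [if_neg]
  intro h
  have : (k : ℕ) = (l : ℕ) := congrArg Fin.val h
  omega

lemma sum_mul_pad {r N : ℕ} (hr : r ≤ N) (P : Matrix (Fin r) (Fin r) ℂ) (j : Fin r)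
    (f : Fin N → ℂ) :
    ∑ k, f k * pad hr P j k = ∑ l, f (Fin.castLE hr l) * P l j := by
  calc ∑ k, f k * pad hr P j k
      = ∑ k, ∑ l : Fin r, (if k = Fin.castLE hr l then f k * P l j else 0) := by
        simp [pad, Finset.mul_sum, mul_ite]
    _ = ∑ l : Fin r, ∑ k, (if k = Fin.castLE hr l then f k * P l j else 0) :=
        Finset.sum_comm
    _ = ∑ l, f (Fin.castLE hr l) * P l j := by simp
end helpers

lemma vec_ne_zero_of_isUnit_det {n : ℕ} (hn : 0 < n) (A : Matrix (Fin n) (Fin n) ℂ)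
    (hA : IsUnit A.det) : _root_.vec A ≠ 0 := by
  intro h
  have hz : A = 0 := by
    ext a b
    have := congrFun h (vecIdx n n (a, b))
    simpa [_root_.vec] using this
  have hne : Nonempty (Fin n) := ⟨⟨0, hn⟩⟩
  rw [hz, Matrix.det_zero] at hA
  simp at hA

lemma det_kron {I₁ I₂ : ℕ} (A₁ : Matrix (Fin I₁) (Fin I₁) ℂ)
    (A₂ : Matrix (Fin I₂) (Fin I₂) ℂ) :
    (kron A₁ A₂).det = A₁.det ^ I₂ * A₂.det ^ I₁ := by
  rw [kron, Matrix.det_reindex_self]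
  simpa using Matrix.det_kronecker A₁ A₂

/-- Lemma 1 of the paper: two tripartite states
`Ψ' = (Γ'₁,…,Γ'_r)` and `Ψ = (Γ₁,…,Γ_r)` are related via invertible
`A₁, A₂, P` by `(A₁ ⊗ A₂)(vec Γ'₁,…,vec Γ'_r) = (vec Γ₁,…,vec Γ_r) P` iff
there is an invertible block upper-triangular `P̃` with invertible `r×r`
top-left block such that the realignment of `U P̃ U'⁻¹` has rank 1. -/
theorem tripartite_slocc_iff_realign_rank_one {I₁ I₂ r : ℕ}
    (hI₁ : 0 < I₁) (hI₂ : 0 < I₂) (hr : r ≤ I₁ * I₂)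
    (Γ Γ' : Fin r → Matrix (Fin I₁) (Fin I₂) ℂ)
    (hΓ : LinearIndependent ℂ fun j => _root_.vec (Γ j))
    (hΓ' : LinearIndependent ℂ fun j => _root_.vec (Γ' j))
    (U U' : Matrix (Fin (I₁ * I₂)) (Fin (I₁ * I₂)) ℂ)
    (hU : IsUnit U.det) (hU' : IsUnit U'.det)
    (hUcol : ∀ (j : Fin r) (i : Fin (I₁ * I₂)), U i (Fin.castLE hr j) = _root_.vec (Γ j) i)
    (hU'col : ∀ (j : Fin r) (i : Fin (I₁ * I₂)), U' i (Fin.castLE hr j) = _root_.vec (Γ' j) i) :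
    (∃ (A₁ : Matrix (Fin I₁) (Fin I₁) ℂ) (A₂ : Matrix (Fin I₂) (Fin I₂) ℂ)
        (P : Matrix (Fin r) (Fin r) ℂ),
        IsUnit A₁.det ∧ IsUnit A₂.det ∧ IsUnit P.det ∧
        kron A₁ A₂ * (Matrix.of fun i (j : Fin r) => _root_.vec (Γ' j) i) =
          (Matrix.of fun i (j : Fin r) => _root_.vec (Γ j) i) * P) ↔
    (∃ Pt : Matrix (Fin (I₁ * I₂)) (Fin (I₁ * I₂)) ℂ,
        IsUnit Pt.det ∧
        (∀ i j : Fin (I₁ * I₂), (j : ℕ) < r → r ≤ (i : ℕ) → Pt i j = 0) ∧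
        IsUnit (Matrix.of fun i j : Fin r =>
          Pt (Fin.castLE hr i) (Fin.castLE hr j)).det ∧
        (realign (U * Pt * U'⁻¹)).rank = 1) := by
  constructor
  · rintro ⟨A₁, A₂, P, hA₁, hA₂, hP, heq⟩
    set M := kron A₁ A₂ with hM
    set Pt := U⁻¹ * M * U' with hPt
    have hUPt : U * Pt = M * U' := by
      rw [hPt, ← Matrix.mul_assoc, ← Matrix.mul_assoc, Matrix.mul_nonsing_inv _ hU,
        Matrix.one_mul]
    -- the key column computation
    have hcol : ∀ (j : Fin r) (k : Fin (I₁ * I₂)),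
        Pt k (Fin.castLE hr j) = pad hr P j k := by
      intro j
      have hveq : U *ᵥ (fun k => Pt k (Fin.castLE hr j)) = U *ᵥ pad hr P j := by
        funext i
        show ∑ k, U i k * Pt k (Fin.castLE hr j) = ∑ k, U i k * pad hr P j k
        have h1 : ∑ k, U i k * Pt k (Fin.castLE hr j) = (U * Pt) i (Fin.castLE hr j) :=
          (Matrix.mul_apply).symm
        have h2 : (M * U') i (Fin.castLE hr j) = ∑ k, M i k * _root_.vec (Γ' j) k := by
          rw [Matrix.mul_apply]
          exact Finset.sum_congr rfl fun k _ => by rw [hU'col]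
        have h3 : ∑ k, M i k * _root_.vec (Γ' j) k
            = (M * (Matrix.of fun i (j : Fin r) => _root_.vec (Γ' j) i)) i j := by
          rw [Matrix.mul_apply]; rfl
        have h4 : ((Matrix.of fun i (j : Fin r) => _root_.vec (Γ j) i) * P) i j
            = ∑ l, U i (Fin.castLE hr l) * P l j := by
          rw [Matrix.mul_apply]
          exact Finset.sum_congr rfl fun l _ => by rw [hUcol]; rfl
        rw [h1, hUPt, h2, h3, heq, h4, sum_mul_pad]
      have h5 : (fun k => Pt k (Fin.castLE hr j)) = pad hr P j := by
        have := congrArg (fun w => U⁻¹ *ᵥ w) hveq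
        simpa [Matrix.mulVec_mulVec, Matrix.nonsing_inv_mul _ hU, Matrix.one_mulVec] using this
      exact fun k => congrFun h5 k
    have hMdet : IsUnit M.det := by
      rw [hM, det_kron, isUnit_iff_ne_zero]
      rw [isUnit_iff_ne_zero] at hA₁ hA₂
      exact mul_ne_zero (pow_ne_zero _ hA₁) (pow_ne_zero _ hA₂)
    refine ⟨Pt, ?_, ?_, ?_, ?_⟩
    · rw [hPt, Matrix.det_mul, Matrix.det_mul]
      exact ((Matrix.isUnit_nonsing_inv_det U hU).mul hMdet).mul hU'
    · intro i j hj hi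
      have hj' : j = Fin.castLE hr ⟨(j : ℕ), hj⟩ := Fin.ext rfl
      rw [hj', hcol ⟨(j : ℕ), hj⟩ i, pad_ge hr _ _ hi]
    · have hb : (Matrix.of fun i j : Fin r =>
          Pt (Fin.castLE hr i) (Fin.castLE hr j)) = P := by
        ext i j
        show Pt (Fin.castLE hr i) (Fin.castLE hr j) = P i j
        rw [hcol j, pad_castLE]
      rw [hb]; exact hP
    · have hM' : U * Pt * U'⁻¹ = M := by
        rw [hUPt, Matrix.mul_assoc, Matrix.mul_nonsing_inv _ hU', Matrix.mul_one]
      rw [hM', hM, realign_kron]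
      exact rank_vecMulVec_eq_one
        (vec_ne_zero_of_isUnit_det hI₁ A₁ hA₁)
        (vec_ne_zero_of_isUnit_det hI₂ A₂ hA₂)
  · rintro ⟨Pt, hPtdet, hzero, hblk, hrank⟩
    set M := U * Pt * U'⁻¹ with hM
    obtain ⟨u, v, huv⟩ := eq_vecMulVec_of_rank_eq_one hrank
    have hMkron : M = kron (unvec u) (unvec v) := by
      apply realign_injective
      rw [huv, realign_kron, vec_unvec, vec_unvec]
    set P : Matrix (Fin r) (Fin r) ℂ :=
      Matrix.of fun i j : Fin r => Pt (Fin.castLE hr i) (Fin.castLE hr j) with hPdef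
    have hMdet : IsUnit M.det := by
      rw [hM, Matrix.det_mul, Matrix.det_mul]
      exact (hU.mul hPtdet).mul (Matrix.isUnit_nonsing_inv_det U' hU')
    have hdet12 : IsUnit (unvec u).det ∧ IsUnit (unvec v).det := by
      rw [hMkron, det_kron, isUnit_iff_ne_zero, mul_ne_zero_iff] at hMdet
      rw [isUnit_iff_ne_zero, isUnit_iff_ne_zero]
      exact ⟨fun h => hMdet.1 (by rw [h]; exact zero_pow (by omega)),
             fun h => hMdet.2 (by rw [h]; exact zero_pow (by omega))⟩
    have hMU' : M * U' = U * Pt := by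
      rw [hM, Matrix.mul_assoc, Matrix.nonsing_inv_mul _ hU', Matrix.mul_one]
    have hPtcol : ∀ (j : Fin r) (k : Fin (I₁ * I₂)),
        Pt k (Fin.castLE hr j) = pad hr P j k := by
      intro j k
      by_cases hk : (k : ℕ) < r
      · have hk' : k = Fin.castLE hr ⟨(k : ℕ), hk⟩ := Fin.ext rfl
        rw [hk', pad_castLE]
        rfl
      · rw [hzero k (Fin.castLE hr j) (by simp) (by omega),
          pad_ge hr _ _ (by omega)]
    refine ⟨unvec u, unvec v, P, hdet12.1, hdet12.2, hblk, ?_⟩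
    ext i j
    show (kron (unvec u) (unvec v) * (Matrix.of fun i (j : Fin r) => _root_.vec (Γ' j) i)) i j
        = ((Matrix.of fun i (j : Fin r) => _root_.vec (Γ j) i) * P) i j
    have h1 : (kron (unvec u) (unvec v) * (Matrix.of fun i (j : Fin r) => _root_.vec (Γ' j) i)) i j
        = (M * U') i (Fin.castLE hr j) := by
      rw [← hMkron, Matrix.mul_apply, Matrix.mul_apply]
      exact Finset.sum_congr rfl fun k _ => by rw [hU'col]; rfl
    have h2 : (U * Pt) i (Fin.castLE hr j) = ∑ k, U i k * pad hr P j k := by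
      rw [Matrix.mul_apply]
      exact Finset.sum_congr rfl fun k _ => by rw [hPtcol]
    have h3 : ((Matrix.of fun i (j : Fin r) => _root_.vec (Γ j) i) * P) i j
        = ∑ l, U i (Fin.castLE hr l) * P l j := by
      rw [Matrix.mul_apply]
      exact Finset.sum_congr rfl fun l _ => by rw [hUcol]; rfl
    rw [h1, hMU', h2, sum_mul_pad, h3]
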